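/- For the Bayesian M-hypothesis nearest-neighbor test with full-support distributions P_1,…,P_M on finite alphabet X, the total error probability satisfies P(e) ≤ 2^{-n(min_{i≠j} C(P_i,P_j) - (|X|-1)·log₂(n+1)/n - (log₂ M)/n)}, where C is Chernoff information. -/

import Mathlib

/-!
The nearest-type test is the maximum-likelihood test: `n (D(T‖P) - D(T‖Q))` is the
log-likelihood ratio `log Q(x⃗) - log P(x⃗)` of any sequence of type `T`. Hence on the sequences
decided as `H_j`, `P_i(x⃗) ≤ P_j(x⃗) ≤ P_i(x⃗)^λ P_j(x⃗)^(1-λ)` for every `λ ∈ [0,1]`, and summing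
over all sequences bounds `P(decide H_j | H_i)` by `(∑ₓ P_i(x)^λ P_j(x)^(1-λ))^n`, i.e. by
`2^(-n C(P_i,P_j))` after optimizing in `λ`. A union bound over the `M - 1` wrong decisions and
averaging over the prior give `P(e) ≤ (M - 1) 2^(-n min C)`, which is below the claimed bound.
-/

open Finset
open scoped Classical

/-- Empirical type of a sequence. -/
noncomputable def typeOf {α : Type*} [Fintype α] [DecidableEq α] {n : ℕ} (xv : Fin n → α) :
    α → ℝ :=
  fun a => ((Finset.univ.filter fun i => xv i = a).card : ℝ) / n

/-- Base-2 KL divergence. -/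
noncomputable def KL {α : Type*} [Fintype α] (P Q : α → ℝ) : ℝ :=
  ∑ x, P x * Real.logb 2 (P x / Q x)

/-- Chernoff information with base-2 logarithm. -/
noncomputable def chernoff {α : Type*} [Fintype α] (P Q : α → ℝ) : ℝ :=
  - sInf ((fun l : ℝ => Real.logb 2 (∑ x, P x ^ l * Q x ^ (1 - l))) '' Set.Icc (0:ℝ) 1)

open Real

section MethodOfTypes

variable {α : Type*} [Fintype α]

theorem KL_sub_KL (T P Q : α → ℝ) (hP : ∀ x, P x ≠ 0) (hQ : ∀ x, Q x ≠ 0) :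
    KL T P - KL T Q = ∑ x, T x * (logb 2 (Q x) - logb 2 (P x)) := by
  rw [KL, KL, ← Finset.sum_sub_distrib]
  refine Finset.sum_congr rfl fun x _ => ?_
  by_cases hT : T x = 0
  · simp [hT]
  · rw [logb_div hT (hP x), logb_div hT (hQ x)]
    ring

variable [DecidableEq α] {n : ℕ}

theorem nat_mul_sum_typeOf_mul (xv : Fin n → α) (f : α → ℝ) :
    n * ∑ x, typeOf xv x * f x = ∑ k, f (xv k) := by
  rcases Nat.eq_zero_or_pos n with rfl | hn
  · simp
  rw [← Finset.sum_fiberwise' Finset.univ xv f, Finset.mul_sum]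
  refine Finset.sum_congr rfl fun x _ => ?_
  rw [typeOf, Finset.sum_const, nsmul_eq_mul]
  field_simp

theorem prod_le_prod_of_KL_typeOf_le (xv : Fin n → α) {P Q : α → ℝ}
    (hP : ∀ x, 0 < P x) (hQ : ∀ x, 0 < Q x) (h : KL (typeOf xv) Q ≤ KL (typeOf xv) P) :
    ∏ k, P (xv k) ≤ ∏ k, Q (xv k) := by
  have hlog : ∑ k, logb 2 (P (xv k)) ≤ ∑ k, logb 2 (Q (xv k)) := by
    have hdiff := nat_mul_sum_typeOf_mul xv fun x => logb 2 (Q x) - logb 2 (P x)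
    rw [← KL_sub_KL _ _ _ (fun x => (hP x).ne') (fun x => (hQ x).ne'),
      Finset.sum_sub_distrib] at hdiff
    nlinarith [n.cast_nonneg (α := ℝ)]
  rwa [← logb_prod _ _ fun k _ => (hP _).ne', ← logb_prod _ _ fun k _ => (hQ _).ne',
    logb_le_logb one_lt_two (Finset.prod_pos fun k _ => hP _)
      (Finset.prod_pos fun k _ => hQ _)] at hlog

end MethodOfTypes

theorem le_rpow_mul_rpow_one_sub_of_le {a b l : ℝ} (ha : 0 < a) (hab : a ≤ b) (hl : l ≤ 1) :
    a ≤ a ^ l * b ^ (1 - l) :=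
  calc a = a ^ l * a ^ (1 - l) := by rw [← rpow_add ha, add_sub_cancel, rpow_one]
    _ ≤ a ^ l * b ^ (1 - l) := by gcongr

theorem sum_prod_le_pow_sum_rpow_mul_rpow {α : Type*} [Fintype α] {n : ℕ} {P Q : α → ℝ}
    (hP : ∀ x, 0 < P x) (hQ : ∀ x, 0 ≤ Q x) (s : Finset (Fin n → α))
    (hs : ∀ xv ∈ s, ∏ k, P (xv k) ≤ ∏ k, Q (xv k)) {l : ℝ} (hl : l ≤ 1) :
    ∑ xv ∈ s, ∏ k, P (xv k) ≤ (∑ x, P x ^ l * Q x ^ (1 - l)) ^ n := by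
  have hterm_nonneg : ∀ xv : Fin n → α, 0 ≤ ∏ k, P (xv k) ^ l * Q (xv k) ^ (1 - l) :=
    fun xv => Finset.prod_nonneg fun k _ =>
      mul_nonneg (rpow_nonneg (hP _).le _) (rpow_nonneg (hQ _) _)
  calc ∑ xv ∈ s, ∏ k, P (xv k)
      ≤ ∑ xv ∈ s, ∏ k, P (xv k) ^ l * Q (xv k) ^ (1 - l) := by
        refine Finset.sum_le_sum fun xv hxv => ?_
        rw [Finset.prod_mul_distrib, finsetProd_rpow _ _ (fun k _ => (hP _).le),
          finsetProd_rpow _ _ (fun k _ => hQ _)]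
        exact le_rpow_mul_rpow_one_sub_of_le (Finset.prod_pos fun k _ => hP _) (hs xv hxv) hl
    _ ≤ ∑ xv : Fin n → α, ∏ k, P (xv k) ^ l * Q (xv k) ^ (1 - l) :=
        Finset.sum_le_sum_of_subset_of_nonneg (Finset.subset_univ s)
          fun xv _ _ => hterm_nonneg xv
    _ = (∑ x, P x ^ l * Q x ^ (1 - l)) ^ n := by rw [Fintype.sum_pow]

theorem le_two_rpow_mul_sInf_logb {s : Set ℝ} (hs : s.Nonempty) (f : ℝ → ℝ) {n : ℕ}
    (hn : 0 < n) {A : ℝ} (hA : ∀ l ∈ s, A ≤ f l ^ n) :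
    A ≤ 2 ^ (n * sInf ((fun l => logb 2 (f l)) '' s)) := by
  rcases le_or_gt A 0 with hA0 | hA0
  · exact hA0.trans (rpow_pos_of_pos two_pos _).le
  have hn' : (0 : ℝ) < n := Nat.cast_pos.mpr hn
  rw [← logb_le_iff_le_rpow one_lt_two hA0, ← div_le_iff₀' hn']
  refine le_csInf (hs.image _) ?_
  rintro _ ⟨l, hl, rfl⟩
  rw [div_le_iff₀' hn', ← logb_pow]
  exact logb_le_logb_of_le one_lt_two hA0 (hA l hl)

theorem le_two_rpow_neg_mul_chernoff {α : Type*} [Fintype α] {P Q : α → ℝ} {n : ℕ}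
    (hn : 0 < n) {A : ℝ} (hA : ∀ l ∈ Set.Icc (0 : ℝ) 1, A ≤ (∑ x, P x ^ l * Q x ^ (1 - l)) ^ n) :
    A ≤ 2 ^ (-(n : ℝ) * chernoff P Q) := by
  rw [chernoff, neg_mul_neg]
  exact le_two_rpow_mul_sInf_logb ⟨0, by simp⟩ _ hn hA

section Decision

variable {α ι : Type*} [Fintype α] [DecidableEq α] [DecidableEq ι] {n : ℕ}
  {Ps : ι → α → ℝ} {d : (Fin n → α) → ι}

theorem sum_prod_decide_eq_le (hn : 0 < n) (hpos : ∀ i x, 0 < Ps i x)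
    (hd : ∀ xv j, KL (typeOf xv) (Ps (d xv)) ≤ KL (typeOf xv) (Ps j)) (i j : ι) :
    ∑ xv with d xv = j, ∏ k, Ps i (xv k) ≤ 2 ^ (-(n : ℝ) * chernoff (Ps i) (Ps j)) := by
  refine le_two_rpow_neg_mul_chernoff hn fun l hl => ?_
  refine sum_prod_le_pow_sum_rpow_mul_rpow (hpos i) (fun x => (hpos j x).le) _ ?_ hl.2
  intro xv hxv
  rw [Finset.mem_filter] at hxv
  exact prod_le_prod_of_KL_typeOf_le xv (hpos i) (hpos j) (hxv.2 ▸ hd xv i)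

variable [Fintype ι]

theorem sum_error_le (hn : 0 < n) (hpos : ∀ i x, 0 < Ps i x)
    (hd : ∀ xv j, KL (typeOf xv) (Ps (d xv)) ≤ KL (typeOf xv) (Ps j))
    {C : ℝ} (hC : ∀ i j, i ≠ j → C ≤ chernoff (Ps i) (Ps j)) (i : ι) :
    ∑ xv, (if d xv = i then 0 else ∏ k, Ps i (xv k)) ≤
      ((Fintype.card ι : ℝ) - 1) * 2 ^ (-(n : ℝ) * C) := by
  rw [← Finset.sum_fiberwise Finset.univ d, ← Finset.add_sum_erase _ _ (Finset.mem_univ i),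
    Finset.sum_eq_zero fun xv hxv => if_pos (Finset.mem_filter.mp hxv).2, zero_add]
  calc ∑ j ∈ Finset.univ.erase i, ∑ xv with d xv = j, (if d xv = i then 0 else ∏ k, Ps i (xv k))
      = ∑ j ∈ Finset.univ.erase i, ∑ xv with d xv = j, ∏ k, Ps i (xv k) := by
        refine Finset.sum_congr rfl fun j hj => Finset.sum_congr rfl fun xv hxv => ?_
        rw [(Finset.mem_filter.mp hxv).2, if_neg (Finset.ne_of_mem_erase hj)]
    _ ≤ ∑ j ∈ Finset.univ.erase i, (2 : ℝ) ^ (-(n : ℝ) * C) := by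
        refine Finset.sum_le_sum fun j hj => (sum_prod_decide_eq_le hn hpos hd i j).trans ?_
        exact rpow_le_rpow_of_exponent_le one_le_two <| mul_le_mul_of_nonpos_left
          (hC i j (Finset.ne_of_mem_erase hj).symm) (neg_nonpos.mpr n.cast_nonneg)
    _ = ((Fintype.card ι : ℝ) - 1) * 2 ^ (-(n : ℝ) * C) := by
        rw [Finset.sum_const, Finset.card_erase_of_mem (Finset.mem_univ i), Finset.card_univ,
          nsmul_eq_mul, Nat.cast_pred (Fintype.card_pos_iff.mpr ⟨i⟩)]

theorem bayes_error_le (hn : 0 < n) (hpos : ∀ i x, 0 < Ps i x)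
    (hd : ∀ xv j, KL (typeOf xv) (Ps (d xv)) ≤ KL (typeOf xv) (Ps j))
    {C : ℝ} (hC : ∀ i j, i ≠ j → C ≤ chernoff (Ps i) (Ps j))
    {prior : ι → ℝ} (hprior : ∀ i, 0 ≤ prior i) (hprior1 : ∑ i, prior i = 1) :
    ∑ xv, ∑ i, prior i * (if d xv = i then 0 else ∏ k, Ps i (xv k)) ≤
      ((Fintype.card ι : ℝ) - 1) * 2 ^ (-(n : ℝ) * C) :=
  calc ∑ xv, ∑ i, prior i * (if d xv = i then 0 else ∏ k, Ps i (xv k))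
      = ∑ i, prior i * ∑ xv, (if d xv = i then 0 else ∏ k, Ps i (xv k)) := by
        rw [Finset.sum_comm]
        simp only [Finset.mul_sum]
    _ ≤ ∑ i, prior i * (((Fintype.card ι : ℝ) - 1) * 2 ^ (-(n : ℝ) * C)) :=
        Finset.sum_le_sum fun i _ =>
          mul_le_mul_of_nonneg_left (sum_error_le hn hpos hd hC i) (hprior i)
    _ = ((Fintype.card ι : ℝ) - 1) * 2 ^ (-(n : ℝ) * C) := by
        rw [← Finset.sum_mul, hprior1, one_mul]

end Decision

theorem sub_one_mul_two_rpow_le {M n : ℕ} (hM : 0 < M) (hn : 0 < n) (C : ℝ) {a : ℝ}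
    (ha : 0 ≤ a) :
    ((M : ℝ) - 1) * 2 ^ (-(n : ℝ) * C) ≤ 2 ^ (-(n : ℝ) * (C - a / n - logb 2 M / n)) := by
  have hn' : (n : ℝ) ≠ 0 := Nat.cast_ne_zero.mpr hn.ne'
  have hM' : (0 : ℝ) < M := Nat.cast_pos.mpr hM
  have hexp : -(n : ℝ) * (C - a / n - logb 2 M / n) = -(n : ℝ) * C + a + logb 2 M := by
    field_simp
    ring
  rw [hexp, rpow_add two_pos, rpow_add two_pos, rpow_logb two_pos (by norm_num) hM']
  have h1 : (1 : ℝ) ≤ 2 ^ a := one_le_rpow one_le_two ha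
  have h2 : (0 : ℝ) < 2 ^ (-(n : ℝ) * C) := rpow_pos_of_pos two_pos _
  nlinarith [mul_le_mul_of_nonneg_left h1 (mul_pos h2 hM').le]

theorem stmt16_general {α : Type*} [Fintype α] [DecidableEq α] {M n : ℕ} (hM : 2 ≤ M) (hn : 0 < n)
    (Ps : Fin M → α → ℝ)
    (hpos : ∀ i x, 0 < Ps i x) (hsum : ∀ i, ∑ x, Ps i x = 1)
    (prior : Fin M → ℝ) (hprior : ∀ i, 0 < prior i) (hprior1 : ∑ i, prior i = 1)
    (d : (Fin n → α) → Fin M)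
    (hd : ∀ (xv : Fin n → α) (j : Fin M),
      KL (typeOf xv) (Ps (d xv)) ≤ KL (typeOf xv) (Ps j)) :
    (∑ xv : Fin n → α, ∑ i, prior i * (if d xv = i then 0 else ∏ k, Ps i (xv k))) ≤
      (2:ℝ) ^ (-(n:ℝ) *
        (sInf {y : ℝ | ∃ i j : Fin M, i ≠ j ∧ y = chernoff (Ps i) (Ps j)} -
          ((Fintype.card α : ℝ) - 1) * Real.logb 2 (n + 1) / n -
          Real.logb 2 M / n)) := by
  have hα : Nonempty α := by
    by_contra h
    simpa [not_nonempty_iff.mp h] using hsum ⟨0, by omega⟩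
  set C := sInf {y : ℝ | ∃ i j : Fin M, i ≠ j ∧ y = chernoff (Ps i) (Ps j)}
  have hC : ∀ i j, i ≠ j → C ≤ chernoff (Ps i) (Ps j) := fun i j hij =>
    csInf_le ((Set.finite_range fun p : Fin M × Fin M => chernoff (Ps p.1) (Ps p.2)).subset
      (by rintro _ ⟨i, j, -, rfl⟩; exact ⟨(i, j), rfl⟩)).bddBelow ⟨i, j, hij, rfl⟩
  have hlog : 0 ≤ ((Fintype.card α : ℝ) - 1) * logb 2 (n + 1) :=
    mul_nonneg (sub_nonneg.mpr (Nat.one_le_cast.mpr Fintype.card_pos))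
      (logb_nonneg one_lt_two (by linarith [n.cast_nonneg (α := ℝ)]))
  calc _ ≤ ((Fintype.card (Fin M) : ℝ) - 1) * 2 ^ (-(n : ℝ) * C) :=
        bayes_error_le hn hpos hd hC (fun i => (hprior i).le) hprior1
    _ ≤ _ := by
        rw [Fintype.card_fin]
        exact sub_one_mul_two_rpow_le (by omega) hn C hlog

theorem stmt16 {α : Type*} [Fintype α] [DecidableEq α] {M n : ℕ} (hM : 2 ≤ M) (hn : 0 < n)
    (Ps : Fin M → α → ℝ)
    (hpos : ∀ i x, 0 < Ps i x) (hsum : ∀ i, ∑ x, Ps i x = 1)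
    (hdist : ∀ i j, i ≠ j → Ps i ≠ Ps j)
    (prior : Fin M → ℝ) (hprior : ∀ i, 0 < prior i) (hprior1 : ∑ i, prior i = 1)
    (d : (Fin n → α) → Fin M)
    (hd : ∀ (xv : Fin n → α) (j : Fin M),
      KL (typeOf xv) (Ps (d xv)) ≤ KL (typeOf xv) (Ps j)) :
    (∑ xv : Fin n → α, ∑ i, prior i * (if d xv = i then 0 else ∏ k, Ps i (xv k))) ≤
      (2:ℝ) ^ (-(n:ℝ) *
        (sInf {y : ℝ | ∃ i j : Fin M, i ≠ j ∧ y = chernoff (Ps i) (Ps j)} -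
          ((Fintype.card α : ℝ) - 1) * Real.logb 2 (n + 1) / n -
          Real.logb 2 M / n)) :=
  stmt16_general hM hn Ps hpos hsum prior hprior hprior1 d hd
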